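/- If A ∈ ℂⁿˣⁿ is invertible, then SRG(A⁻¹) = { (z⁻¹)* : z ∈ SRG(A) }, i.e., the SRG of the inverse operator is the conjugate-inverse (Möbius) image of the SRG of A. -/

import Mathlib

open Complex

noncomputable def ang {n : ℕ} (y u : EuclideanSpace ℂ (Fin n)) : ℝ :=
  Real.arccos ((inner ℂ y u : ℂ).re / (‖y‖ * ‖u‖))

noncomputable def SRG {n : ℕ}
    (A : EuclideanSpace ℂ (Fin n) →ₗ[ℂ] EuclideanSpace ℂ (Fin n)) : Set ℂ :=
  { z | ∃ u : EuclideanSpace ℂ (Fin n), u ≠ 0 ∧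
      (z = ((‖A u‖ / ‖u‖ : ℝ) : ℂ) * Complex.exp ((ang (A u) u : ℝ) * Complex.I) ∨
       z = ((‖A u‖ / ‖u‖ : ℝ) : ℂ) * Complex.exp (-((ang (A u) u : ℝ)) * Complex.I)) }

noncomputable def SRGm {n : ℕ} (A : Matrix (Fin n) (Fin n) ℂ) : Set ℂ :=
  SRG (Matrix.toEuclideanLin A)

lemma ang_symm {n : ℕ} (y u : EuclideanSpace ℂ (Fin n)) : ang y u = ang u y := by
  unfold ang
  rw [← inner_conj_symm y u, Complex.conj_re, mul_comm]

lemma conj_inv_key (r s : ℝ) :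
    (starRingEnd ℂ) (((r : ℂ) * Complex.exp (s * Complex.I))⁻¹)
      = ((r⁻¹ : ℝ) : ℂ) * Complex.exp (s * Complex.I) := by
  rw [mul_inv, ← Complex.exp_neg, map_mul, ← Complex.exp_conj]
  simp [map_inv₀]

theorem srg_inv {n : ℕ} (A : Matrix (Fin n) (Fin n) ℂ) (hA : IsUnit A) :
    SRGm A⁻¹ = { w : ℂ | ∃ z ∈ SRGm A, w = (starRingEnd ℂ) z⁻¹ } := by
  have hdet : IsUnit A.det := (Matrix.isUnit_iff_isUnit_det A).mp hA
  have h1 : A⁻¹ * A = 1 := Matrix.nonsing_inv_mul A hdet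
  have h2 : A * A⁻¹ = 1 := Matrix.mul_nonsing_inv A hdet
  set f := Matrix.toEuclideanLin A with hf
  set g := Matrix.toEuclideanLin A⁻¹ with hg
  have hgf : ∀ v, g (f v) = v := by
    intro v
    simp only [hf, hg, Matrix.toEuclideanLin_apply]
    simp [Matrix.mulVec_mulVec, h1]
  have hfg : ∀ v, f (g v) = v := by
    intro v
    simp only [hf, hg, Matrix.toEuclideanLin_apply]
    simp [Matrix.mulVec_mulVec, h2]
  ext w
  simp only [SRGm, SRG, Set.mem_setOf_eq, ← hf, ← hg]
  constructor
  · rintro ⟨u, hu, hw⟩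
    have hvne : g u ≠ 0 := fun h => hu (by rw [← hfg u, h, map_zero])
    have hune : ‖u‖ ≠ 0 := norm_ne_zero_iff.mpr hu
    have hvnorm : ‖g u‖ ≠ 0 := norm_ne_zero_iff.mpr hvne
    have hang : ang (f (g u)) (g u) = ang (g u) u := by
      rw [hfg u, ang_symm]
    have hr : ((‖f (g u)‖ / ‖g u‖ : ℝ))⁻¹ = (‖g u‖ / ‖u‖ : ℝ) := by
      rw [hfg u, inv_div]
    rcases hw with hw | hw
    · exact ⟨_, ⟨g u, hvne, Or.inl rfl⟩, by rw [conj_inv_key, hr, hang, hw]⟩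
    · refine ⟨_, ⟨g u, hvne, Or.inr rfl⟩, ?_⟩
      rw [show (-(ang (f (g u)) (g u)) * Complex.I : ℂ)
            = ((-(ang (f (g u)) (g u)) : ℝ) : ℂ) * Complex.I by push_cast; ring,
        conj_inv_key, hr, hang, hw]
      push_cast; ring_nf
  · rintro ⟨z, ⟨v, hv, hz⟩, hw⟩
    have hune : f v ≠ 0 := fun h => hv (by rw [← hgf v, h, map_zero])
    have hang : ang (g (f v)) (f v) = ang (f v) v := by
      rw [hgf v, ang_symm]
    have hr : ((‖f v‖ / ‖v‖ : ℝ))⁻¹ = (‖g (f v)‖ / ‖f v‖ : ℝ) := by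
      rw [hgf v, inv_div]
    refine ⟨f v, hune, ?_⟩
    rcases hz with hz | hz
    · left
      rw [hw, hz, conj_inv_key, hr, hang]
    · right
      rw [hw, hz, show (-(ang (f v) v) * Complex.I : ℂ)
            = ((-(ang (f v) v) : ℝ) : ℂ) * Complex.I by push_cast; ring,
        conj_inv_key, hr, hang]
      push_cast; ring_nf
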